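/- arXiv:0707.2884 — 8 statements merged into one kernel-verified Lean document; each statement's English description precedes it below -/
import Mathlib

section
/- Let f : ℝ² → [0,1] be continuous such that for every v, w ∈ ℝ², the map λ ↦ f(w + λ·v) is monotone (either monotone nondecreasing or monotone nonincreasing, depending on v, w). Then there exists a nonzero vector v ∈ ℝ² such that λ ↦ f(λ·v) is constant on ℝ. -/
/-!
For `r > 0` and a direction `θ ∈ [0, π]`, the difference `f (r u_θ) - f (-r u_θ)` changes sign
between `θ = 0` and `θ = π` (where `u_π = -u_0`), so by the intermediate value theorem the set
of directions along which `f` takes equal values at `±r` is a nonempty compact subset of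
`[0, π]`. Monotonicity along the line through `±r u_θ` makes `f` constant on the segment between
them, so these sets shrink as `r` grows. A direction in all of them gives a line on which `f` is
constant.
-/

open Set

noncomputable def unitVec (θ : ℝ) : ℝ × ℝ := (Real.cos θ, Real.sin θ)

lemma continuous_unitVec : Continuous unitVec :=
  Real.continuous_cos.prodMk Real.continuous_sin

lemma unitVec_ne_zero (θ : ℝ) : unitVec θ ≠ 0 := by
  intro h
  have hcos : Real.cos θ = 0 := congrArg Prod.fst h
  have hsin : Real.sin θ = 0 := congrArg Prod.snd h
  simpa [hcos, hsin] using Real.sin_sq_add_cos_sq θ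

lemma unitVec_pi : unitVec Real.pi = -unitVec 0 := by
  simp [unitVec]

lemma eq_of_mem_Icc_of_eq {α β : Type*} [Preorder α] [PartialOrder β] {h : α → β}
    (hm : Monotone h ∨ Antitone h) {x y a : α} (hxy : h x = h y) (ha : a ∈ Icc x y) :
    h a = h x := by
  rcases hm with hm | hm
  · exact le_antisymm (hxy ▸ hm ha.2) (hm ha.1)
  · exact le_antisymm (hm ha.1) (hxy ▸ hm ha.2)

lemma eq_of_forall_nat_eq_neg {h : ℝ → ℝ} (hm : Monotone h ∨ Antitone h)
    (hbal : ∀ n : ℕ, h n = h (-n)) (a b : ℝ) : h a = h b := by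
  obtain ⟨n, hn⟩ := exists_nat_ge (max |a| |b|)
  have mem_Icc {c : ℝ} (hc : |c| ≤ n) : c ∈ Icc (-(n : ℝ)) n := abs_le.mp hc
  rw [eq_of_mem_Icc_of_eq hm (hbal n).symm (mem_Icc ((le_max_left _ _).trans hn)),
    eq_of_mem_Icc_of_eq hm (hbal n).symm (mem_Icc ((le_max_right _ _).trans hn))]

def balancedDirections (f : ℝ × ℝ → ℝ) (r : ℝ) : Set ℝ :=
  {θ ∈ Icc 0 Real.pi | f (r • unitVec θ) = f ((-r) • unitVec θ)}

section BalancedDirections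

variable {f : ℝ × ℝ → ℝ}

lemma continuous_comp_smul_unitVec (hf : Continuous f) (r : ℝ) :
    Continuous fun θ => f (r • unitVec θ) :=
  hf.comp (continuous_unitVec.const_smul r)

lemma isCompact_balancedDirections (hf : Continuous f) (r : ℝ) :
    IsCompact (balancedDirections f r) :=
  isCompact_Icc.inter_right
    (isClosed_eq (continuous_comp_smul_unitVec hf r) (continuous_comp_smul_unitVec hf (-r)))

lemma balancedDirections_nonempty (hf : Continuous f) (r : ℝ) :
    (balancedDirections f r).Nonempty := by
  set g : ℝ → ℝ := fun θ => f (r • unitVec θ) - f ((-r) • unitVec θ)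
  have hg : Continuous g :=
    (continuous_comp_smul_unitVec hf r).sub (continuous_comp_smul_unitVec hf (-r))
  have hg_pi : g Real.pi = -g 0 := by
    simp only [g, unitVec_pi, smul_neg, neg_smul, neg_neg]
    ring
  have hzero : (0 : ℝ) ∈ uIcc (g 0) (g Real.pi) := by
    rw [hg_pi, mem_uIcc]
    rcases le_total (g 0) 0 with h | h
    · exact Or.inl ⟨h, by linarith⟩
    · exact Or.inr ⟨by linarith, h⟩
  obtain ⟨θ, hθ, hgθ⟩ := intermediate_value_uIcc hg.continuousOn hzero
  rw [uIcc_of_le Real.pi_pos.le] at hθ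
  exact ⟨θ, hθ, sub_eq_zero.mp hgθ⟩

lemma balancedDirections_anti
    (hray : ∀ v : ℝ × ℝ,
      Monotone (fun t : ℝ => f (t • v)) ∨ Antitone (fun t : ℝ => f (t • v)))
    {r R : ℝ} (hr : 0 ≤ r) (hrR : r ≤ R) :
    balancedDirections f R ⊆ balancedDirections f r := by
  rintro θ ⟨hθ, hR⟩
  have hseg {t : ℝ} (ht : t ∈ Icc (-R) R) : f (t • unitVec θ) = f ((-R) • unitVec θ) :=
    eq_of_mem_Icc_of_eq (hray (unitVec θ)) hR.symm ht
  refine ⟨hθ, ?_⟩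
  rw [hseg (t := r) ⟨by linarith, hrR⟩, hseg (t := -r) ⟨by linarith, by linarith⟩]

end BalancedDirections

theorem stmt0_general (f : ℝ × ℝ → ℝ)
    (hcont : Continuous f)
    (hmono : ∀ v w : ℝ × ℝ,
      Monotone (fun t : ℝ => f (w + t • v)) ∨ Antitone (fun t : ℝ => f (w + t • v))) :
    ∃ v : ℝ × ℝ, v ≠ 0 ∧ ∀ a b : ℝ, f (a • v) = f (b • v) := by
  have hray (v : ℝ × ℝ) :
      Monotone (fun t : ℝ => f (t • v)) ∨ Antitone (fun t : ℝ => f (t • v)) := by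
    simpa using hmono v 0
  obtain ⟨θ, hθ⟩ := IsCompact.nonempty_iInter_of_sequence_nonempty_isCompact_isClosed
    (fun n : ℕ => balancedDirections f n)
    (fun n => balancedDirections_anti hray n.cast_nonneg (by simp))
    (fun n => balancedDirections_nonempty hcont n)
    (isCompact_balancedDirections hcont _)
    (fun n => (isCompact_balancedDirections hcont n).isClosed)
  exact ⟨unitVec θ, unitVec_ne_zero θ,
    eq_of_forall_nat_eq_neg (hray (unitVec θ)) fun n => (mem_iInter.mp hθ n).2⟩

/-- Lemma 1: a continuous function on ℝ², valued in [0,1], monotone along every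
line, is constant along some ray through the origin. -/
theorem stmt0 (f : ℝ × ℝ → ℝ)
    (hcont : Continuous f)
    (hrange : ∀ x, f x ∈ Set.Icc (0 : ℝ) 1)
    (hmono : ∀ v w : ℝ × ℝ,
      Monotone (fun t : ℝ => f (w + t • v)) ∨ Antitone (fun t : ℝ => f (w + t • v))) :
    ∃ v : ℝ × ℝ, v ≠ 0 ∧ ∀ a b : ℝ, f (a • v) = f (b • v) :=
  stmt0_general f hcont hmono
end

section
/- Let f : ℝ² → [0,1] be continuous such that along every line in ℝ² the restriction of f is monotone. Then for every point w ∈ ℝ² there exists a nonzero direction v ∈ ℝ² such that λ ↦ f(w + λ·v) is constant. -/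
open Real Filter Topology

private noncomputable def vv (θ : ℝ) : ℝ × ℝ := (Real.cos θ, Real.sin θ)

private lemma vv_cont : Continuous vv := by
  unfold vv; fun_prop

private lemma vv_ne_zero (θ : ℝ) : vv θ ≠ 0 := by
  intro h
  have h1 := Real.sin_sq_add_cos_sq θ
  have hc : Real.cos θ = 0 := congrArg Prod.fst h
  have hs : Real.sin θ = 0 := congrArg Prod.snd h
  rw [hc, hs] at h1; norm_num at h1

private lemma const_on (f : ℝ × ℝ → ℝ) (hcont : Continuous f)
    (hmono : ∀ v w : ℝ × ℝ,
      Monotone (fun t : ℝ => f (w + t • v)) ∨ Antitone (fun t : ℝ => f (w + t • v)))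
    (w : ℝ × ℝ) (R : ℝ) :
    ∃ θ ∈ Set.Icc 0 Real.pi, ∀ a : ℝ, |a| ≤ R → f (w + a • vv θ) = f w := by
  set h : ℝ → ℝ := fun θ => f (w + R • vv θ) - f (w + (-R) • vv θ) with hh
  have hhc : Continuous h := by
    apply Continuous.sub
    · exact hcont.comp (continuous_const.add (vv_cont.const_smul R))
    · exact hcont.comp (continuous_const.add (vv_cont.const_smul (-R)))
  have hvpi : vv Real.pi = - vv 0 := by
    unfold vv; simp
  have hpi : h Real.pi = - h 0 := by
    simp only [hh, hvpi, smul_neg]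
    have e1 : R • vv 0 = -((-R) • vv 0) := by simp
    have e2 : (-R) • vv 0 = -(R • vv 0) := by simp
    rw [show -(R • vv 0) = (-R) • vv 0 by simp, show -((-R) • vv 0) = R • vv 0 by simp]
    ring
  have h0mem : (0:ℝ) ∈ Set.uIcc (h 0) (h Real.pi) := by
    rw [hpi, Set.mem_uIcc]
    rcases le_total (h 0) 0 with h' | h'
    · left; constructor <;> linarith
    · right; constructor <;> linarith
  obtain ⟨θ, hθmem, hθ⟩ := intermediate_value_uIcc (hhc.continuousOn) h0mem
  rw [Set.uIcc_of_le Real.pi_pos.le] at hθmem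
  have heq : f (w + R • vv θ) = f (w + (-R) • vv θ) := by
    have := hθ
    simp only [hh] at this
    linarith [this]
  refine ⟨θ, hθmem, ?_⟩
  intro a ha
  rw [abs_le] at ha
  have hR0 : (0:ℝ) ≤ R := by linarith [ha.1, ha.2]
  have gaR : ∀ b : ℝ, -R ≤ b → b ≤ R → f (w + b • vv θ) = f (w + R • vv θ) := by
    intro b hb1 hb2
    rcases hmono (vv θ) w with hm | hm
    · have h1 : f (w + b • vv θ) ≤ f (w + R • vv θ) := hm hb2
      have h2 : f (w + (-R) • vv θ) ≤ f (w + b • vv θ) := hm hb1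
      linarith [heq]
    · have h1 : f (w + R • vv θ) ≤ f (w + b • vv θ) := hm hb2
      have h2 : f (w + b • vv θ) ≤ f (w + (-R) • vv θ) := hm hb1
      linarith [heq]
  have hA := gaR a ha.1 ha.2
  have h0 := gaR 0 (by linarith) hR0
  rw [hA, ← h0]
  simp

/-- Lemma 2: through every point there is a constant line. -/
theorem stmt1 (f : ℝ × ℝ → ℝ)
    (hcont : Continuous f)
    (hrange : ∀ x, f x ∈ Set.Icc (0 : ℝ) 1)
    (hmono : ∀ v w : ℝ × ℝ,
      Monotone (fun t : ℝ => f (w + t • v)) ∨ Antitone (fun t : ℝ => f (w + t • v))) :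
    ∀ w : ℝ × ℝ, ∃ v : ℝ × ℝ, v ≠ 0 ∧ ∀ a b : ℝ, f (w + a • v) = f (w + b • v) := by
  intro w
  choose θ hθmem hθ using fun n : ℕ => const_on f hcont hmono w (n : ℝ)
  obtain ⟨L, hL, φ, hφ, hconv⟩ := isCompact_Icc.tendsto_subseq hθmem
  have key : ∀ a : ℝ, f (w + a • vv L) = f w := by
    intro a
    have hG : Continuous fun t : ℝ => f (w + a • vv t) :=
      hcont.comp (continuous_const.add (vv_cont.const_smul a))
    have h1 : Tendsto (fun n => f (w + a • vv (θ (φ n)))) atTop (𝓝 (f (w + a • vv L))) :=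
      (hG.continuousAt.tendsto).comp hconv
    have h2 : ∀ᶠ n in atTop, f (w + a • vv (θ (φ n))) = f w := by
      filter_upwards [eventually_ge_atTop ⌈|a|⌉₊] with n hn
      apply hθ (φ n)
      have h3 : (⌈|a|⌉₊ : ℝ) ≤ (φ n : ℝ) := by
        exact_mod_cast hn.trans (hφ.le_apply)
      exact (Nat.le_ceil |a|).trans h3
    have h1' : Tendsto (fun n => f (w + a • vv (θ (φ n)))) atTop (𝓝 (f w)) :=
      Tendsto.congr' (Filter.EventuallyEq.symm h2) tendsto_const_nhds
    exact tendsto_nhds_unique h1 h1'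
  exact ⟨vv L, vv_ne_zero L, fun a b => by rw [key a, key b]⟩
end

section
/- Let f : ℝ² → ℝ be monotone along every line and not constant. If ℓ₁ = w + ℝ·v and ℓ₂ = w' + ℝ·v' are two lines on which f is constant, then v and v' are parallel, i.e., there exists μ ∈ ℝ with v = μ·v'. -/
/-!
If the directions `v`, `v'` of two lines on which `f` is constant were not parallel, the lines
would meet, so `f` would take one value `c` on both. Every point `x` is then the midpoint of a
point `p` of the first line and a point `q` of the second (the sum of two non-parallel lines is the
whole plane), and monotonicity of `f` along the line through `p` and `q` forces `f x = c`; so `f`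
would be constant.
-/

open Module

theorem apply_eq_of_monotone_or_antitone {α β : Type*} [Preorder α] [PartialOrder β] {g : α → β}
    (hg : Monotone g ∨ Antitone g) {a b c : α} (hab : a ≤ b) (hbc : b ≤ c) (hac : g a = g c) :
    g b = g c := by
  rcases hg with hg | hg
  · exact le_antisymm (hg hbc) (hac ▸ hg hab)
  · exact le_antisymm (hac ▸ hg hab) (hg hbc)

theorem exists_smul_add_smul_eq_of_forall_ne_smul {K V : Type*} [DivisionRing K] [AddCommGroup V]
    [Module K V] (hdim : finrank K V = 2) {v v' : V} (hv' : v' ≠ 0) (hpar : ∀ μ : K, v ≠ μ • v')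
    (u : V) : ∃ s t : K, s • v + t • v' = u := by
  have hli : LinearIndependent K ![v', v] :=
    (LinearIndependent.pair_iff' hv').2 fun μ h => hpar μ h.symm
  have htop := hli.span_eq_top_of_card_eq_finrank (by simp [hdim])
  rw [Matrix.range_cons_cons_empty] at htop
  obtain ⟨t, s, h⟩ := Submodule.mem_span_pair.1 (htop ▸ Submodule.mem_top (x := u))
  exact ⟨s, t, by rw [← h, add_comm]⟩

variable {𝕜 E β : Type*} [CommRing 𝕜] [PartialOrder 𝕜] [IsOrderedRing 𝕜] [AddCommGroup E]
  [Module 𝕜 E] [PartialOrder β]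

theorem apply_eq_of_apply_sub_eq_apply_add {f : E → β} {x u : E}
    (hline : Monotone (fun t : 𝕜 => f (x + t • u)) ∨ Antitone (fun t : 𝕜 => f (x + t • u)))
    (heq : f (x - u) = f (x + u)) : f x = f (x + u) := by
  have hends : f (x + (-1 : 𝕜) • u) = f (x + (1 : 𝕜) • u) := by simpa [sub_eq_add_neg] using heq
  simpa using apply_eq_of_monotone_or_antitone hline (neg_nonpos.2 zero_le_one) zero_le_one hends

theorem apply_eq_of_const_on_spanning_lines {f : E → β}
    (hmono : ∀ v w : E,
      Monotone (fun t : 𝕜 => f (w + t • v)) ∨ Antitone (fun t : 𝕜 => f (w + t • v)))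
    {w w' v v' : E} (hspan : ∀ u : E, ∃ s t : 𝕜, s • v + t • v' = u)
    (h1 : ∀ t : 𝕜, f (w + t • v) = f w) (h2 : ∀ t : 𝕜, f (w' + t • v') = f w') (x : E) :
    f x = f w := by
  obtain ⟨a, b, hab⟩ := hspan (w' - w)
  have hww' : f w' = f w := by
    rw [← h2 (-b), ← h1 a]
    congr 1
    linear_combination (norm := module) -hab
  obtain ⟨s, t, hst⟩ := hspan ((2 : 𝕜) • x - w - w')
  have hp : x + (w + s • v - x) = w + s • v := by abel
  have hq : x - (w + s • v - x) = w' + t • v' := by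
    linear_combination (norm := module) -hst
  have hx := apply_eq_of_apply_sub_eq_apply_add (hmono _ x) (by rw [hp, hq, h1, h2, hww'])
  rwa [hp, h1] at hx

theorem stmt3_general (f : ℝ × ℝ → ℝ)
    (hmono : ∀ v w : ℝ × ℝ,
      Monotone (fun t : ℝ => f (w + t • v)) ∨ Antitone (fun t : ℝ => f (w + t • v)))
    (hnc : ¬ ∀ x y : ℝ × ℝ, f x = f y)
    (w w' v v' : ℝ × ℝ) (hv' : v' ≠ 0)
    (h1 : ∀ t : ℝ, f (w + t • v) = f w)
    (h2 : ∀ t : ℝ, f (w' + t • v') = f w') :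
    ∃ μ : ℝ, v = μ • v' := by
  by_contra! hpar
  have hspan := exists_smul_add_smul_eq_of_forall_ne_smul (by simp) hv' hpar
  have hconst := apply_eq_of_const_on_spanning_lines hmono hspan h1 h2
  exact hnc fun x y => by rw [hconst x, hconst y]

/-- Lemma 3: for a nonconstant function monotone along every line,
all constant lines are parallel. -/
theorem stmt3 (f : ℝ × ℝ → ℝ)
    (hmono : ∀ v w : ℝ × ℝ,
      Monotone (fun t : ℝ => f (w + t • v)) ∨ Antitone (fun t : ℝ => f (w + t • v)))
    (hnc : ¬ ∀ x y : ℝ × ℝ, f x = f y)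
    (w w' v v' : ℝ × ℝ) (hv : v ≠ 0) (hv' : v' ≠ 0)
    (h1 : ∀ t : ℝ, f (w + t • v) = f w)
    (h2 : ∀ t : ℝ, f (w' + t • v') = f w') :
    ∃ μ : ℝ, v = μ • v' :=
  stmt3_general f hmono hnc w w' v v' hv' h1 h2
end

section
/- Let V be a finite-dimensional real vector space, f : V → ℝ monotone along every line, and suppose f is constant on an affine hyperplane H and also constant on a second affine hyperplane H' that is not parallel to H, with the constant values agreeing on H ∩ H'. If H ∩ H' ≠ ∅ and dim V ≥ 2, then f is constant on the affine span of H ∪ H'. -/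
open FiniteDimensional

/-- Intersection argument of Lemma 5: if `f` is constant on two non-parallel
affine hyperplanes with a common point and agreeing values, it is constant on
the affine span of their union. -/
theorem stmt5 (V : Type*) [AddCommGroup V] [Module ℝ V] [FiniteDimensional ℝ V]
    (hdim : 2 ≤ Module.finrank ℝ V)
    (f : V → ℝ)
    (hmono : ∀ v w : V,
      Monotone (fun t : ℝ => f (w + t • v)) ∨ Antitone (fun t : ℝ => f (w + t • v)))
    (W W' : Submodule ℝ V)
    (hW : Module.finrank ℝ W = Module.finrank ℝ V - 1)
    (hW' : Module.finrank ℝ W' = Module.finrank ℝ V - 1)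
    (hnp : W ≠ W')
    (w w' : V)
    (hconst : ∀ x ∈ W, f (w + x) = f w)
    (hconst' : ∀ x ∈ W', f (w' + x) = f w')
    (hint : ({y | y - w ∈ W} ∩ {y | y - w' ∈ W'} : Set V).Nonempty)
    (hagree : f w = f w') :
    ∀ x ∈ affineSpan ℝ ({y | y - w ∈ W} ∪ {y | y - w' ∈ W'} : Set V),
      f x = f w := by
  obtain ⟨p, hp, hp'⟩ := hint
  -- W ⊔ W' = ⊤
  have hlt : W < W ⊔ W' := by
    refine lt_of_le_of_ne le_sup_left ?_
    intro h
    have hle : W' ≤ W := by rw [h]; exact le_sup_right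
    exact hnp ((Submodule.eq_of_le_of_finrank_le hle (by rw [hW, hW'])).symm)
  have htop : W ⊔ W' = ⊤ := by
    apply Submodule.eq_top_of_finrank_eq
    have h1 := Submodule.finrank_lt_finrank_of_lt hlt
    have h2 := Submodule.finrank_le (W ⊔ W')
    omega
  intro x _
  have hx : x - p ∈ W ⊔ W' := by rw [htop]; trivial
  obtain ⟨a, ha, b, hb, hab⟩ := Submodule.mem_sup.mp hx
  have key1 : f (x + (1 : ℝ) • (b - a)) = f w := by
    have hxe : x + (1 : ℝ) • (b - a) = w' + ((p - w') + (b + b)) := by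
      have : x = p + (a + b) := by rw [hab]; abel
      rw [this]; rw [one_smul]; abel
    rw [hxe, hconst' _ (W'.add_mem hp' (W'.add_mem hb hb)), hagree]
  have key2 : f (x + (-1 : ℝ) • (b - a)) = f w := by
    have hxe : x + (-1 : ℝ) • (b - a) = w + ((p - w) + (a + a)) := by
      have : x = p + (a + b) := by rw [hab]; abel
      rw [this, neg_one_smul]; abel
    rw [hxe, hconst _ (W.add_mem hp (W.add_mem ha ha))]
  have key0 : f (x + (0 : ℝ) • (b - a)) = f x := by rw [zero_smul, add_zero]
  rcases hmono (b - a) x with h | h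
  · have h1 := h (show (-1 : ℝ) ≤ 0 by norm_num)
    have h2 := h (show (0 : ℝ) ≤ 1 by norm_num)
    simp only at h1 h2
    rw [key1] at h2; rw [key2] at h1; rw [key0] at h1 h2
    linarith
  · have h1 := h (show (-1 : ℝ) ≤ 0 by norm_num)
    have h2 := h (show (0 : ℝ) ≤ 1 by norm_num)
    simp only at h1 h2
    rw [key1] at h2; rw [key2] at h1; rw [key0] at h1 h2
    linarith
end

section
/- The function f : ℝ² → ℝ defined by f(θ₁, θ₂) = (1/(1+exp(−a₁θ₁)))·(1/(1+exp(−a₂θ₂))) with a₁, a₂ > 0 is not monotone along every line: there exist v, w ∈ ℝ² such that λ ↦ f(w + λ·v) is not monotone. -/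
/-- The dimension-wise independent (Whitley) model is not monotone along every
line. -/
theorem stmt9 (a₁ a₂ : ℝ) (ha₁ : 0 < a₁) (ha₂ : 0 < a₂)
    (f : ℝ × ℝ → ℝ)
    (hf : ∀ θ : ℝ × ℝ,
      f θ = (1 / (1 + Real.exp (-a₁ * θ.1))) * (1 / (1 + Real.exp (-a₂ * θ.2)))) :
    ∃ v w : ℝ × ℝ,
      ¬ Monotone (fun t : ℝ => f (w + t • v)) ∧
      ¬ Antitone (fun t : ℝ => f (w + t • v)) := by
  set T : ℝ := max (Real.log 4 / a₁) (Real.log 4 / a₂) with hTdef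
  have hlog : (0:ℝ) < Real.log 4 := Real.log_pos (by norm_num)
  have hTpos : 0 < T := lt_max_of_lt_left (div_pos hlog ha₁)
  have ha₁T : Real.log 4 ≤ a₁ * T := by
    have := le_max_left (Real.log 4 / a₁) (Real.log 4 / a₂)
    rw [div_le_iff₀ ha₁] at this; linarith [this]
  have ha₂T : Real.log 4 ≤ a₂ * T := by
    have := le_max_right (Real.log 4 / a₁) (Real.log 4 / a₂)
    rw [div_le_iff₀ ha₂] at this; linarith [this]
  have h4 : Real.exp (Real.log 4) = 4 := Real.exp_log (by norm_num)
  have he1 : (4:ℝ) ≤ Real.exp (a₁ * T) := by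
    rw [← h4]; exact Real.exp_le_exp.mpr ha₁T
  have he2 : (4:ℝ) ≤ Real.exp (a₂ * T) := by
    rw [← h4]; exact Real.exp_le_exp.mpr ha₂T
  refine ⟨(1, -1), (0, 0), ?_, ?_⟩
  · -- not monotone : g 0 > g T
    intro h
    have key := h (le_of_lt hTpos)
    simp only [hf] at key
    have e0 : ((0:ℝ), (0:ℝ)) + (0:ℝ) • ((1:ℝ), (-1:ℝ)) = ((0:ℝ), (0:ℝ)) := by
      simp
    have eT : ((0:ℝ), (0:ℝ)) + T • ((1:ℝ), (-1:ℝ)) = (T, -T) := by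
      simp [Prod.ext_iff]
    rw [e0, eT] at key
    simp only [mul_zero, neg_zero, Real.exp_zero] at key
    have hx : 0 < Real.exp (-a₁ * T) := Real.exp_pos _
    have hy : -a₂ * (-T) = a₂ * T := by ring
    rw [hy] at key
    have hy1 : (4:ℝ) ≤ Real.exp (a₂ * T) := he2
    have h1 : 1 / (1 + Real.exp (-a₁ * T)) ≤ 1 := by
      rw [div_le_one (by linarith)]; linarith
    have h2 : 1 / (1 + Real.exp (a₂ * T)) ≤ 1/5 := by
      rw [div_le_div_iff₀ (by linarith) (by norm_num)]; linarith
    have hp1 : 0 < 1 / (1 + Real.exp (-a₁ * T)) := by positivity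
    have hp2 : 0 < 1 / (1 + Real.exp (a₂ * T)) := by positivity
    nlinarith [key, h1, h2, hp1, hp2]
  · -- not antitone : g (-T) < g 0
    intro h
    have key := h (by linarith : (-T : ℝ) ≤ 0)
    simp only [hf] at key
    have e0 : ((0:ℝ), (0:ℝ)) + (0:ℝ) • ((1:ℝ), (-1:ℝ)) = ((0:ℝ), (0:ℝ)) := by
      simp
    have eT : ((0:ℝ), (0:ℝ)) + (-T) • ((1:ℝ), (-1:ℝ)) = (-T, T) := by
      simp [Prod.ext_iff]
    rw [e0, eT] at key
    simp only [mul_zero, neg_zero, Real.exp_zero] at key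
    have hx1 : -a₁ * (-T) = a₁ * T := by ring
    rw [hx1] at key
    have hx : 0 < Real.exp (-a₂ * T) := Real.exp_pos _
    have h1 : 1 / (1 + Real.exp (-a₂ * T)) ≤ 1 := by
      rw [div_le_one (by linarith)]; linarith
    have h2 : 1 / (1 + Real.exp (a₁ * T)) ≤ 1/5 := by
      rw [div_le_div_iff₀ (by linarith) (by norm_num)]; linarith
    have hp1 : 0 < 1 / (1 + Real.exp (-a₂ * T)) := by positivity
    have hp2 : 0 < 1 / (1 + Real.exp (a₁ * T)) := by positivity
    nlinarith [key, h1, h2, hp1, hp2]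
end

section
/- Fix a₁ > 0 and define F : ℝ² → ℝ by F(x, y) = (1/(1+exp(−a₁(x+y))))·(1/(1+exp(−a₁(x−y)))). There do not exist functions h, g : ℝ → ℝ with F(x, y) = h(x)·g(y) for all x, y ∈ ℝ. -/
/-- Non-factorizability (Section 3.6): after the coordinate change
`G = [[1,1],[1,-1]]` the Whitley model does not factor. -/
theorem stmt10 (a₁ : ℝ) (ha₁ : 0 < a₁) (F : ℝ → ℝ → ℝ)
    (hF : ∀ x y : ℝ,
      F x y = (1 / (1 + Real.exp (-a₁ * (x + y)))) * (1 / (1 + Real.exp (-a₁ * (x - y))))) :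
    ¬ ∃ h g : ℝ → ℝ, ∀ x y : ℝ, F x y = h x * g y := by
  rintro ⟨h, g, hfg⟩
  set t : ℝ := a₁⁻¹ with ht
  have hat : a₁ * t = 1 := mul_inv_cancel₀ ha₁.ne'
  have key : F 0 0 * F t t = F 0 t * F t 0 := by
    rw [hfg, hfg, hfg, hfg]; ring
  rw [hF, hF, hF, hF] at key
  have e00 : -a₁ * ((0:ℝ) + 0) = 0 := by ring
  have e00' : -a₁ * ((0:ℝ) - 0) = 0 := by ring
  have ett : -a₁ * (t + t) = -2 := by rw [show -a₁ * (t + t) = -(2 * (a₁ * t)) by ring, hat]; norm_num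
  have ett' : -a₁ * (t - t) = 0 := by ring
  have e0t : -a₁ * ((0:ℝ) + t) = -1 := by rw [show -a₁ * ((0:ℝ) + t) = -(a₁ * t) by ring, hat]
  have e0t' : -a₁ * ((0:ℝ) - t) = 1 := by rw [show -a₁ * ((0:ℝ) - t) = a₁ * t by ring, hat]
  have et0 : -a₁ * (t + 0) = -1 := by rw [show -a₁ * (t + 0) = -(a₁ * t) by ring, hat]
  have et0' : -a₁ * (t - 0) = -1 := by rw [show -a₁ * (t - 0) = -(a₁ * t) by ring, hat]
  rw [e00, e00', ett, ett', e0t, e0t', et0, et0', Real.exp_zero] at key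
  set E : ℝ := Real.exp 1 with hE
  have hEpos : 0 < E := Real.exp_pos 1
  have hexp1 : Real.exp (-1 : ℝ) = E⁻¹ := by rw [Real.exp_neg]
  have hexp2 : Real.exp (-2 : ℝ) = (E * E)⁻¹ := by
    rw [show (-2 : ℝ) = (-1) + (-1) by norm_num, Real.exp_add, hexp1, mul_inv]
  rw [hexp1, hexp2] at key
  have hElo : 2.7182818283 < E := Real.exp_one_gt_d9
  have hEhi : E < 2.7182818286 := Real.exp_one_lt_d9
  have h1 : (0:ℝ) < 1 + E⁻¹ := by positivity
  have h2 : (0:ℝ) < 1 + (E * E)⁻¹ := by positivity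
  have h3 : (0:ℝ) < 1 + E := by positivity
  field_simp at key
  nlinarith [sq_nonneg E, sq_nonneg (E - 2.72), mul_pos hEpos hEpos, sq_nonneg (E*E)]
end

section
/- Let f : ℝᴰ → ℝ be continuous, monotone along every line, and suppose f is not constant. Then the set P of vectors v with lim_{λ→∞} f(λv) = sup_λ f(λv) > inf_λ f(λv) is open, the set N of vectors with lim_{λ→−∞} f(λv) = sup_λ f(λv) > inf_λ f(λv) is open, P and N are disjoint, and P = −N. -/
/-!
A bounded function of `t` that is monotone or antitone converges to its supremum at one end and
to its infimum at the other. Hence `v ∈ P` exactly when `t ↦ f (t • v)` strictly increases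
somewhere, i.e. `f (s • v) < f (t • v)` for some `s < t`, which for fixed `s, t` is an open
condition on `v`. Reparametrizing by `t ↦ -t` gives `N = -P`, and a line along which `f`
increases somewhere and decreases somewhere is neither monotone nor antitone, so `P ∩ N = ∅`.
-/

open Filter Set Topology

section MonotoneOrAntitone

variable {ι α : Type*} [Nonempty ι] [ConditionallyCompleteLinearOrder α] {g : ι → α}

theorem exists_lt_of_ciInf_lt_ciSup (h : ⨅ i, g i < ⨆ i, g i) : ∃ a b, g a < g b := by
  obtain ⟨b, hb⟩ := exists_lt_of_lt_ciSup h
  obtain ⟨a, ha⟩ := exists_lt_of_ciInf_lt hb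
  exact ⟨a, b, ha⟩

theorem tendsto_atTop_ciSup_and_ciInf_lt_iff [LinearOrder ι] [TopologicalSpace α]
    [OrderTopology α] (hg : Monotone g ∨ Antitone g)
    (hA : BddAbove (range g)) (hB : BddBelow (range g)) :
    (Tendsto g atTop (𝓝 (⨆ i, g i)) ∧ ⨅ i, g i < ⨆ i, g i) ↔ ∃ s t, s < t ∧ g s < g t := by
  constructor
  · rintro ⟨hlim, hlt⟩
    obtain ⟨a, b, hab⟩ := exists_lt_of_ciInf_lt_ciSup hlt
    rcases hg with hmono | hanti
    · exact ⟨a, b, hmono.reflect_lt hab, hab⟩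
    · have hsup_eq_inf : ⨆ i, g i = ⨅ i, g i :=
        tendsto_nhds_unique hlim (tendsto_atTop_ciInf hanti hB)
      exact absurd hlt (hsup_eq_inf ▸ lt_irrefl _)
  · rintro ⟨s, t, hst, hlt⟩
    have hmono : Monotone g := hg.resolve_right fun hanti => (hanti hst.le).not_gt hlt
    exact ⟨tendsto_atTop_ciSup hmono hA,
      (ciInf_le hB s).trans_lt (hlt.trans_le (le_ciSup hA t))⟩

end MonotoneOrAntitone

section Directions

variable {E α : Type*} [AddCommGroup E] [Module ℝ E]
  [ConditionallyCompleteLinearOrder α] [TopologicalSpace α]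

def risingDirections (f : E → α) : Set E :=
  {v | Tendsto (fun t : ℝ => f (t • v)) atTop (𝓝 (⨆ t : ℝ, f (t • v))) ∧
    (⨅ t : ℝ, f (t • v)) < ⨆ t : ℝ, f (t • v)}

def fallingDirections (f : E → α) : Set E :=
  {v | Tendsto (fun t : ℝ => f (t • v)) atBot (𝓝 (⨆ t : ℝ, f (t • v))) ∧
    (⨅ t : ℝ, f (t • v)) < ⨆ t : ℝ, f (t • v)}

theorem fallingDirections_eq_neg (f : E → α) : fallingDirections f = -risingDirections f := by
  ext v
  have hline : (fun t : ℝ => f (t • -v)) = fun t => f ((-t) • v) := by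
    simp only [smul_neg, neg_smul]
  simp only [Set.mem_neg, risingDirections, fallingDirections, mem_ofPred_eq, hline,
    tendsto_comp_neg_atTop_iff (f := fun t : ℝ => f (t • v)),
    neg_surjective.iSup_comp fun t : ℝ => f (t • v),
    neg_surjective.iInf_comp fun t : ℝ => f (t • v)]

variable [OrderTopology α] {f : E → α}
  (hf : ∀ v : E, Monotone (fun t : ℝ => f (t • v)) ∨ Antitone (fun t : ℝ => f (t • v)))
  (hA : BddAbove (range f)) (hB : BddBelow (range f))
include hf hA hB

theorem mem_risingDirections_iff {v : E} :
    v ∈ risingDirections f ↔ ∃ s t : ℝ, s < t ∧ f (s • v) < f (t • v) :=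
  tendsto_atTop_ciSup_and_ciInf_lt_iff (hf v) (hA.mono (range_comp_subset_range _ f))
    (hB.mono (range_comp_subset_range _ f))

theorem isOpen_risingDirections [TopologicalSpace E] [ContinuousConstSMul ℝ E]
    (hcont : Continuous f) : IsOpen (risingDirections f) := by
  have hunion :
      risingDirections f = ⋃ (s : ℝ) (t : ℝ) (_ : s < t), {v | f (s • v) < f (t • v)} := by
    ext v
    simp only [mem_risingDirections_iff hf hA hB, mem_iUnion, mem_ofPred_eq, exists_prop]
  rw [hunion]
  exact isOpen_iUnion fun s => isOpen_iUnion fun t => isOpen_iUnion fun _ =>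
    isOpen_lt (hcont.comp (continuous_const_smul s)) (hcont.comp (continuous_const_smul t))

theorem disjoint_risingDirections_fallingDirections :
    Disjoint (risingDirections f) (fallingDirections f) := by
  rw [fallingDirections_eq_neg, disjoint_left]
  intro v hrise hfall
  rw [mem_risingDirections_iff hf hA hB] at hrise
  rw [Set.mem_neg, mem_risingDirections_iff hf hA hB] at hfall
  obtain ⟨s, t, hst, hup⟩ := hrise
  obtain ⟨s', t', hst', hdown⟩ := hfall
  simp only [smul_neg, ← neg_smul] at hdown
  rcases hf v with hmono | hanti
  · exact (hmono (neg_le_neg hst'.le)).not_gt hdown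
  · exact (hanti hst.le).not_gt hup

end Directions

theorem stmt13_general (D : ℕ) (f : (Fin D → ℝ) → ℝ)
    (hcont : Continuous f)
    (hrange : ∀ x, f x ∈ Set.Icc (0 : ℝ) 1)
    (hmono : ∀ v w : Fin D → ℝ,
      Monotone (fun t : ℝ => f (w + t • v)) ∨ Antitone (fun t : ℝ => f (w + t • v))) :
    IsOpen {v : Fin D → ℝ |
        Tendsto (fun t : ℝ => f (t • v)) atTop (nhds (⨆ t : ℝ, f (t • v))) ∧
        (⨅ t : ℝ, f (t • v)) < ⨆ t : ℝ, f (t • v)} ∧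
    IsOpen {v : Fin D → ℝ |
        Tendsto (fun t : ℝ => f (t • v)) atBot (nhds (⨆ t : ℝ, f (t • v))) ∧
        (⨅ t : ℝ, f (t • v)) < ⨆ t : ℝ, f (t • v)} ∧
    {v : Fin D → ℝ |
        Tendsto (fun t : ℝ => f (t • v)) atTop (nhds (⨆ t : ℝ, f (t • v))) ∧
        (⨅ t : ℝ, f (t • v)) < ⨆ t : ℝ, f (t • v)} ∩
      {v : Fin D → ℝ |
        Tendsto (fun t : ℝ => f (t • v)) atBot (nhds (⨆ t : ℝ, f (t • v))) ∧
        (⨅ t : ℝ, f (t • v)) < ⨆ t : ℝ, f (t • v)} = ∅ ∧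
    {v : Fin D → ℝ |
        Tendsto (fun t : ℝ => f (t • v)) atTop (nhds (⨆ t : ℝ, f (t • v))) ∧
        (⨅ t : ℝ, f (t • v)) < ⨆ t : ℝ, f (t • v)} =
      -{v : Fin D → ℝ |
        Tendsto (fun t : ℝ => f (t • v)) atBot (nhds (⨆ t : ℝ, f (t • v))) ∧
        (⨅ t : ℝ, f (t • v)) < ⨆ t : ℝ, f (t • v)} := by
  have hline : ∀ v : Fin D → ℝ,
      Monotone (fun t : ℝ => f (t • v)) ∨ Antitone (fun t : ℝ => f (t • v)) := fun v => by
    simpa using hmono v 0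
  have hA : BddAbove (range f) := ⟨1, forall_mem_range.2 fun x => (hrange x).2⟩
  have hB : BddBelow (range f) := ⟨0, forall_mem_range.2 fun x => (hrange x).1⟩
  have hP := isOpen_risingDirections hline hA hB hcont
  refine ⟨hP, ?_, (disjoint_risingDirections_fallingDirections hline hA hB).inter_eq, ?_⟩
  · change IsOpen (fallingDirections f)
    rw [fallingDirections_eq_neg]
    exact hP.neg
  · change risingDirections f = -fallingDirections f
    rw [fallingDirections_eq_neg, neg_neg]

/-- Properties of the sets `P` and `N` used in the proofs of Lemmas 1 and 4. -/
theorem stmt13 (D : ℕ) (f : (Fin D → ℝ) → ℝ)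
    (hcont : Continuous f)
    (hrange : ∀ x, f x ∈ Set.Icc (0 : ℝ) 1)
    (hmono : ∀ v w : Fin D → ℝ,
      Monotone (fun t : ℝ => f (w + t • v)) ∨ Antitone (fun t : ℝ => f (w + t • v)))
    (hnc : ¬ ∀ x y : Fin D → ℝ, f x = f y) :
    IsOpen {v : Fin D → ℝ |
        Tendsto (fun t : ℝ => f (t • v)) atTop (nhds (⨆ t : ℝ, f (t • v))) ∧
        (⨅ t : ℝ, f (t • v)) < ⨆ t : ℝ, f (t • v)} ∧
    IsOpen {v : Fin D → ℝ |
        Tendsto (fun t : ℝ => f (t • v)) atBot (nhds (⨆ t : ℝ, f (t • v))) ∧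
        (⨅ t : ℝ, f (t • v)) < ⨆ t : ℝ, f (t • v)} ∧
    {v : Fin D → ℝ |
        Tendsto (fun t : ℝ => f (t • v)) atTop (nhds (⨆ t : ℝ, f (t • v))) ∧
        (⨅ t : ℝ, f (t • v)) < ⨆ t : ℝ, f (t • v)} ∩
      {v : Fin D → ℝ |
        Tendsto (fun t : ℝ => f (t • v)) atBot (nhds (⨆ t : ℝ, f (t • v))) ∧
        (⨅ t : ℝ, f (t • v)) < ⨆ t : ℝ, f (t • v)} = ∅ ∧
    {v : Fin D → ℝ |
        Tendsto (fun t : ℝ => f (t • v)) atTop (nhds (⨆ t : ℝ, f (t • v))) ∧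
        (⨅ t : ℝ, f (t • v)) < ⨆ t : ℝ, f (t • v)} =
      -{v : Fin D → ℝ |
        Tendsto (fun t : ℝ => f (t • v)) atBot (nhds (⨆ t : ℝ, f (t • v))) ∧
        (⨅ t : ℝ, f (t • v)) < ⨆ t : ℝ, f (t • v)} :=
  stmt13_general D f hcont hrange hmono
end

section
/- Let f : ℝ² → ℝ be continuous and bounded, monotone along every line through the origin (i.e., for each v, λ ↦ f(λv) is monotone). If there exist vectors v₊ with f strictly increasing to its sup along ℝ·v₊ and v₋ with f strictly decreasing, then P ∪ N ≠ ℝ² \ {0}, i.e., there exists a nonzero u with f constant on ℝ·u. -/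
/-- Topological core of Lemma 1: if along some ray `f` is strictly increasing
and along some ray strictly decreasing, then some nonzero ray is constant. -/
theorem stmt14 (f : ℝ × ℝ → ℝ)
    (hcont : Continuous f)
    (hbd : ∃ C : ℝ, ∀ x, |f x| ≤ C)
    (hmono : ∀ v : ℝ × ℝ,
      Monotone (fun t : ℝ => f (t • v)) ∨ Antitone (fun t : ℝ => f (t • v)))
    (hP : ∃ v : ℝ × ℝ, StrictMono (fun t : ℝ => f (t • v)))
    (hN : ∃ v : ℝ × ℝ, StrictAnti (fun t : ℝ => f (t • v))) :
    ∃ u : ℝ × ℝ, u ≠ 0 ∧ ∀ a b : ℝ, f (a • u) = f (b • u) := by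
  obtain ⟨vp, hvp⟩ := hP
  obtain ⟨vn, hvn⟩ := hN
  -- the open sets
  set P : Set (ℝ × ℝ) := {v | ∃ a b : ℝ, a ≤ b ∧ f (a • v) < f (b • v)} with hPdef
  set N : Set (ℝ × ℝ) := {v | ∃ a b : ℝ, a ≤ b ∧ f (b • v) < f (a • v)} with hNdef
  have hopen : ∀ (a b : ℝ), IsOpen {v : ℝ × ℝ | f (a • v) < f (b • v)} := by
    intro a b
    exact isOpen_lt (hcont.comp (continuous_const_smul a))
      (hcont.comp (continuous_const_smul b))
  have hPopen : IsOpen P := by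
    have : P = ⋃ a : ℝ, ⋃ b : ℝ, ⋃ _ : a ≤ b, {v : ℝ × ℝ | f (a • v) < f (b • v)} := by
      ext v; simp [hPdef]
    rw [this]
    exact isOpen_iUnion fun a => isOpen_iUnion fun b => isOpen_iUnion fun _ => hopen a b
  have hNopen : IsOpen N := by
    have : N = ⋃ a : ℝ, ⋃ b : ℝ, ⋃ _ : a ≤ b, {v : ℝ × ℝ | f (b • v) < f (a • v)} := by
      ext v; simp [hNdef]
    rw [this]
    exact isOpen_iUnion fun a => isOpen_iUnion fun b => isOpen_iUnion fun _ => hopen b a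
  -- connectedness of complement of 0
  have hrank : 1 < Module.rank ℝ (ℝ × ℝ) := by
    rw [rank_prod', Module.rank_self]
    norm_num
  have hconn : IsPreconnected ({(0 : ℝ × ℝ)}ᶜ : Set (ℝ × ℝ)) :=
    (isConnected_compl_singleton_of_one_lt_rank hrank 0).isPreconnected
  by_contra hcon
  push_neg at hcon
  -- complement is covered by P ∪ N
  have hcover : ({(0 : ℝ × ℝ)}ᶜ : Set (ℝ × ℝ)) ⊆ P ∪ N := by
    intro u hu
    obtain ⟨a, b, hab⟩ := hcon u (by simpa using hu)
    rcases lt_or_gt_of_ne hab with h | h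
    · rcases le_total a b with h' | h'
      · exact Or.inl ⟨a, b, h', h⟩
      · exact Or.inr ⟨b, a, h', h⟩
    · rcases le_total a b with h' | h'
      · exact Or.inr ⟨a, b, h', h⟩
      · exact Or.inl ⟨b, a, h', h⟩
  -- nonempty intersections
  have hvp0 : vp ≠ 0 ∧ vp ∈ P := by
    refine ⟨?_, 0, 1, zero_le_one, hvp zero_lt_one⟩
    intro h
    have := hvp (zero_lt_one (α := ℝ))
    simp [h] at this
  have hvn0 : vn ≠ 0 ∧ vn ∈ N := by
    refine ⟨?_, 0, 1, zero_le_one, hvn zero_lt_one⟩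
    intro h
    have := hvn (zero_lt_one (α := ℝ))
    simp [h] at this
  obtain ⟨u, hu1, hu2⟩ := hconn P N hPopen hNopen hcover
    ⟨vp, by simp [hvp0.1], hvp0.2⟩ ⟨vn, by simp [hvn0.1], hvn0.2⟩
  obtain ⟨⟨a, b, hab, hlt⟩, ⟨c, d, hcd, hlt'⟩⟩ := hu2
  rcases hmono u with h | h
  · exact absurd (h hcd) (not_le.mpr hlt')
  · exact absurd (h hab) (not_le.mpr hlt)
end
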